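/- arXiv:2202.01182 — 3 statements merged into one kernel-verified Lean document; each statement's English description precedes it below -/
import Mathlib

section
/- Let z_1, …, z_n be nonnegative real numbers, let Z_0 = 0 and Z_k = z_1 + … + z_k for 1 ≤ k ≤ n, and suppose that z_k ≤ max{1, Z_{k-1}} for every k. Then ∑_{k=1}^n z_k / √(max{1, Z_{k-1}}) ≤ (1 + √2)·√(Z_n). -/
open Finset

lemma key_step (x z : ℝ) (hx : 0 ≤ x) (hz : 0 ≤ z) (hzm : z ≤ max 1 x) :
    z / Real.sqrt (max 1 x) ≤ (1 + Real.sqrt 2) * (Real.sqrt (x + z) - Real.sqrt x) := by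
  set M := max 1 x with hM
  have hM1 : (1 : ℝ) ≤ M := le_max_left 1 x
  have hM0 : (0 : ℝ) < M := lt_of_lt_of_le one_pos hM1
  have hxM : x ≤ M := le_max_right 1 x
  have hsqM : (0 : ℝ) < Real.sqrt M := Real.sqrt_pos.mpr hM0
  rcases eq_or_lt_of_le hz with h0 | h0
  · simp [← h0]
  · have hxz : 0 < x + z := by linarith
    have hD : 0 < Real.sqrt (x + z) + Real.sqrt x := by
      have := Real.sqrt_pos.mpr hxz
      have := Real.sqrt_nonneg x
      linarith
    have hdiff : Real.sqrt (x + z) - Real.sqrt x =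
        z / (Real.sqrt (x + z) + Real.sqrt x) := by
      rw [eq_div_iff (ne_of_gt hD)]
      have h1 : Real.sqrt (x + z) * Real.sqrt (x + z) = x + z :=
        Real.mul_self_sqrt (le_of_lt hxz)
      have h2 : Real.sqrt x * Real.sqrt x = x := Real.mul_self_sqrt hx
      nlinarith [h1, h2]
    have hsum : Real.sqrt (x + z) + Real.sqrt x ≤ (1 + Real.sqrt 2) * Real.sqrt M := by
      have h1 : Real.sqrt x ≤ Real.sqrt M := Real.sqrt_le_sqrt hxM
      have h2 : Real.sqrt (x + z) ≤ Real.sqrt 2 * Real.sqrt M := by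
        rw [← Real.sqrt_mul (by norm_num)]
        exact Real.sqrt_le_sqrt (by linarith)
      linarith
    rw [hdiff, mul_div_assoc']
    have hnum : z ≤ (1 + Real.sqrt 2) * z := by
      nlinarith [Real.sqrt_nonneg 2]
    calc z / Real.sqrt M ≤ ((1 + Real.sqrt 2) * z) / ((1 + Real.sqrt 2) * Real.sqrt M) := by
          rw [mul_div_mul_left]
          nlinarith [Real.sqrt_nonneg 2]
      _ ≤ ((1 + Real.sqrt 2) * z) / (Real.sqrt (x + z) + Real.sqrt x) := by
          apply div_le_div_of_nonneg_left _ hD hsum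
          nlinarith [Real.sqrt_nonneg 2]

/-- Doubling-episode counting lemma: if `z_k ≤ max{1, Z_{k-1}}` where
`Z_k = z_1 + ⋯ + z_k`, then `∑ z_k/√(max{1, Z_{k-1}}) ≤ (1+√2)·√(Z_n)`. -/
theorem doubling_counting_lemma (n : ℕ) (z : ℕ → ℝ)
    (hz : ∀ k ∈ Finset.Icc 1 n, 0 ≤ z k)
    (hmax : ∀ k ∈ Finset.Icc 1 n, z k ≤ max 1 (∑ i ∈ Finset.Icc 1 (k - 1), z i)) :
    ∑ k ∈ Finset.Icc 1 n, z k / Real.sqrt (max 1 (∑ i ∈ Finset.Icc 1 (k - 1), z i))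
      ≤ (1 + Real.sqrt 2) * Real.sqrt (∑ i ∈ Finset.Icc 1 n, z i) := by
  induction n with
  | zero => simp
  | succ n ih =>
    have hsub : Finset.Icc 1 n ⊆ Finset.Icc 1 (n + 1) :=
      Finset.Icc_subset_Icc_right (by omega)
    have hz' : ∀ k ∈ Finset.Icc 1 n, 0 ≤ z k := fun k hk => hz k (hsub hk)
    have hmax' : ∀ k ∈ Finset.Icc 1 n, z k ≤ max 1 (∑ i ∈ Finset.Icc 1 (k - 1), z i) :=
      fun k hk => hmax k (hsub hk)
    have hSn : 0 ≤ ∑ i ∈ Finset.Icc 1 n, z i := Finset.sum_nonneg hz'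
    have hmem : n + 1 ∈ Finset.Icc 1 (n + 1) := by simp
    have hzn : 0 ≤ z (n + 1) := hz _ hmem
    have hmaxn : z (n + 1) ≤ max 1 (∑ i ∈ Finset.Icc 1 n, z i) := by
      have := hmax _ hmem
      simpa using this
    rw [Finset.sum_Icc_succ_top (by omega : 1 ≤ n + 1),
        Finset.sum_Icc_succ_top (by omega : 1 ≤ n + 1)]
    have hkey := key_step (∑ i ∈ Finset.Icc 1 n, z i) (z (n + 1)) hSn hzn hmaxn
    have hsimp : (n + 1 : ℕ) - 1 = n := by omega
    rw [hsimp]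
    have hih := ih hz' hmax'
    calc (∑ k ∈ Finset.Icc 1 n, z k / Real.sqrt (max 1 (∑ i ∈ Finset.Icc 1 (k - 1), z i)))
          + z (n + 1) / Real.sqrt (max 1 (∑ i ∈ Finset.Icc 1 n, z i))
        ≤ (1 + Real.sqrt 2) * Real.sqrt (∑ i ∈ Finset.Icc 1 n, z i)
          + (1 + Real.sqrt 2) * (Real.sqrt ((∑ i ∈ Finset.Icc 1 n, z i) + z (n + 1))
              - Real.sqrt (∑ i ∈ Finset.Icc 1 n, z i)) := by linarith
      _ = (1 + Real.sqrt 2) * Real.sqrt ((∑ i ∈ Finset.Icc 1 n, z i) + z (n + 1)) := by ring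
end

section
/- Fix positive integers ℵ, S, A, m and a real T > 0. For each episode k ∈ {1,…,m} and each pair (s,a) ∈ {1,…,S}×{1,…,A}, let v_k(s,a) ≥ 0 be real numbers, and set N_k(s,a) := ∑_{j<k} v_j(s,a). Assume (i) v_k(s,a) ≤ max{1, N_k(s,a)} for all k, s, a, and (ii) ∑_{(s,a)} N_{m+1}(s,a) = ℵ·T. Then ∑_{k=1}^m ∑_{(s,a)} v_k(s,a)/√(max{1, N_k(s,a)}) ≤ (1+√2)·√(S·A·ℵ·T). -/
open Finset

lemma step_ineq (N w : ℝ) (hN : 0 ≤ N) (hw : 0 ≤ w) (h : w ≤ max 1 N) :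
    (1 + Real.sqrt 2) * Real.sqrt N + w / Real.sqrt (max 1 N)
      ≤ (1 + Real.sqrt 2) * Real.sqrt (N + w) := by
  have hc2 : (0:ℝ) ≤ Real.sqrt 2 := Real.sqrt_nonneg 2
  have hM1 : (1:ℝ) ≤ max 1 N := le_max_left _ _
  have hMpos : 0 < Real.sqrt (max 1 N) := Real.sqrt_pos.2 (by linarith)
  have ha : 0 ≤ Real.sqrt N := Real.sqrt_nonneg _
  have hb : 0 ≤ Real.sqrt (N + w) := Real.sqrt_nonneg _
  have hba : Real.sqrt N ≤ Real.sqrt (N + w) := Real.sqrt_le_sqrt (by linarith)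
  have hsum : Real.sqrt (N + w) + Real.sqrt N
      ≤ (1 + Real.sqrt 2) * Real.sqrt (max 1 N) := by
    rcases le_total N 1 with h1 | h1
    · have hmax : max 1 N = 1 := max_eq_left h1
      have hw1 : w ≤ 1 := by rw [hmax] at h; exact h
      have h2 : Real.sqrt (N + w) ≤ Real.sqrt 2 := Real.sqrt_le_sqrt (by linarith)
      have h3 : Real.sqrt N ≤ 1 := Real.sqrt_le_one.2 h1
      rw [hmax, Real.sqrt_one]
      linarith
    · have hmax : max 1 N = N := max_eq_right h1
      have hwN : w ≤ N := by rw [hmax] at h; exact h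
      have h2 : Real.sqrt (N + w) ≤ Real.sqrt 2 * Real.sqrt N := by
        rw [← Real.sqrt_mul (by norm_num : (0:ℝ) ≤ 2)]
        exact Real.sqrt_le_sqrt (by linarith)
      rw [hmax]
      nlinarith
  rcases eq_or_lt_of_le hw with h0 | h0
  · rw [← h0, add_zero, zero_div, add_zero]
  · have hN2 : Real.sqrt N ^ 2 = N := Real.sq_sqrt hN
    have hb2 : Real.sqrt (N + w) ^ 2 = N + w := Real.sq_sqrt (by linarith)
    have hkey : (Real.sqrt (N + w) - Real.sqrt N) *
        (Real.sqrt (N + w) + Real.sqrt N) = w := by nlinarith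
    have h1 : w / Real.sqrt (max 1 N)
        ≤ (1 + Real.sqrt 2) * (Real.sqrt (N + w) - Real.sqrt N) := by
      rw [div_le_iff₀ hMpos]
      nlinarith [mul_le_mul_of_nonneg_left hsum (by linarith : 0 ≤ Real.sqrt (N + w) - Real.sqrt N)]
    linarith

lemma pair_bound (m : ℕ) (v : ℕ → ℝ) (hv0 : ∀ k ∈ Finset.Icc 1 m, 0 ≤ v k)
    (hd : ∀ k ∈ Finset.Icc 1 m, v k ≤ max 1 (∑ j ∈ Finset.Ico 1 k, v j)) :
    ∑ k ∈ Finset.Icc 1 m, v k / Real.sqrt (max 1 (∑ j ∈ Finset.Ico 1 k, v j))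
      ≤ (1 + Real.sqrt 2) * Real.sqrt (∑ j ∈ Finset.Ico 1 (m + 1), v j) := by
  induction m with
  | zero =>
      simp only [show Finset.Icc 1 0 = (∅ : Finset ℕ) by decide,
        show Finset.Ico 1 1 = (∅ : Finset ℕ) by decide, Finset.sum_empty, Real.sqrt_zero,
        mul_zero, le_refl]
  | succ n ih =>
      have hsub : ∀ k ∈ Finset.Icc 1 n, k ∈ Finset.Icc 1 (n + 1) := by
        intro k hk
        simp only [Finset.mem_Icc] at hk ⊢
        omega
      have hmem : n + 1 ∈ Finset.Icc 1 (n + 1) := by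
        simp only [Finset.mem_Icc]; omega
      have hN : 0 ≤ ∑ j ∈ Finset.Ico 1 (n + 1), v j := by
        apply Finset.sum_nonneg
        intro j hj
        simp only [Finset.mem_Ico] at hj
        exact hv0 j (by simp only [Finset.mem_Icc]; omega)
      rw [Finset.sum_Icc_succ_top (by omega : 1 ≤ n + 1),
        Finset.sum_Ico_succ_top (by omega : 1 ≤ n + 1)]
      have hstep := step_ineq (∑ j ∈ Finset.Ico 1 (n + 1), v j) (v (n + 1)) hN
        (hv0 _ hmem) (hd _ hmem)
      have ih' := ih (fun k hk => hv0 k (hsub k hk)) (fun k hk => hd k (hsub k hk))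
      linarith

/-- Shared visit-count bound: with `v_k(s,a)` the total visits of all `ℵ` agents to
pair `(s,a)` in episode `k`, `N_k(s,a) = ∑_{j<k} v_j(s,a)`, the doubling condition
`v_k ≤ max{1, N_k}` and grand total `∑_{(s,a)} N_{m+1}(s,a) = ℵ·T`, we have
`∑_k ∑_{(s,a)} v_k/√(max{1, N_k}) ≤ (1+√2)·√(S·A·ℵ·T)`. -/
theorem shared_visit_count_bound (aleph S A m : ℕ) (haleph : 0 < aleph)
    (hS : 0 < S) (hA : 0 < A) (hm : 0 < m) (T : ℝ) (hT : 0 < T)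
    (v : ℕ → Fin S × Fin A → ℝ)
    (hv0 : ∀ k ∈ Finset.Icc 1 m, ∀ x, 0 ≤ v k x)
    (hdouble : ∀ k ∈ Finset.Icc 1 m, ∀ x,
      v k x ≤ max 1 (∑ j ∈ Finset.Ico 1 k, v j x))
    (htotal : ∑ x : Fin S × Fin A, ∑ j ∈ Finset.Ico 1 (m + 1), v j x = aleph * T) :
    ∑ k ∈ Finset.Icc 1 m, ∑ x : Fin S × Fin A,
        v k x / Real.sqrt (max 1 (∑ j ∈ Finset.Ico 1 k, v j x))
      ≤ (1 + Real.sqrt 2) * Real.sqrt (S * A * aleph * T) := by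
  set c := 1 + Real.sqrt 2 with hc
  have hc0 : 0 < c := by have := Real.sqrt_nonneg 2; rw [hc]; linarith
  have hswap : ∑ k ∈ Finset.Icc 1 m, ∑ x : Fin S × Fin A,
        v k x / Real.sqrt (max 1 (∑ j ∈ Finset.Ico 1 k, v j x))
      = ∑ x : Fin S × Fin A, ∑ k ∈ Finset.Icc 1 m,
        v k x / Real.sqrt (max 1 (∑ j ∈ Finset.Ico 1 k, v j x)) :=
    Finset.sum_comm
  rw [hswap]
  have h1 : ∑ x : Fin S × Fin A, ∑ k ∈ Finset.Icc 1 m,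
        v k x / Real.sqrt (max 1 (∑ j ∈ Finset.Ico 1 k, v j x))
      ≤ ∑ x : Fin S × Fin A, c * Real.sqrt (∑ j ∈ Finset.Ico 1 (m + 1), v j x) := by
    apply Finset.sum_le_sum
    intro x _
    exact pair_bound m (fun k => v k x) (fun k hk => hv0 k hk x) (fun k hk => hdouble k hk x)
  refine h1.trans ?_
  rw [← Finset.mul_sum]
  have hcard : (Finset.univ : Finset (Fin S × Fin A)).card = S * A := by
    simp
  have hNnn : ∀ x : Fin S × Fin A, 0 ≤ ∑ j ∈ Finset.Ico 1 (m + 1), v j x := by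
    intro x
    apply Finset.sum_nonneg
    intro j hj
    simp only [Finset.mem_Ico] at hj
    exact hv0 j (by simp only [Finset.mem_Icc]; omega) x
  have hCS : ∑ x : Fin S × Fin A, Real.sqrt (∑ j ∈ Finset.Ico 1 (m + 1), v j x)
      ≤ Real.sqrt ((S * A : ℝ) * (aleph * T)) := by
    rw [Real.le_sqrt (Finset.sum_nonneg fun x _ => Real.sqrt_nonneg _) (by positivity)]
    calc (∑ x : Fin S × Fin A, Real.sqrt (∑ j ∈ Finset.Ico 1 (m + 1), v j x)) ^ 2
        ≤ (Finset.univ : Finset (Fin S × Fin A)).card *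
          ∑ x : Fin S × Fin A, Real.sqrt (∑ j ∈ Finset.Ico 1 (m + 1), v j x) ^ 2 :=
          sq_sum_le_card_mul_sum_sq
      _ = (S * A : ℝ) * (aleph * T) := by
          rw [hcard]
          congr 1
          · push_cast; ring
          · rw [← htotal]
            apply Finset.sum_congr rfl
            intro x _
            exact Real.sq_sqrt (hNnn x)
  have := mul_le_mul_of_nonneg_left hCS hc0.le
  refine this.trans (le_of_eq ?_)
  congr 1
  congr 1
  push_cast
  ring
end

section
/- Fix positive integers S, A and a positive integer T with T ≥ S·A. Let v_1, …, v_m : {1,…,S}×{1,…,A} → ℕ be the visit counts of m episodes, let N_k(s,a) := ∑_{j<k} v_j(s,a), and suppose that every episode k with 1 ≤ k < m terminates by the doubling criterion, i.e., there exists a pair (s,a) with v_k(s,a) ≥ max{1, N_k(s,a)}, and that the total number of steps is ∑_{(s,a)} N_{m+1}(s,a) = T. Then the number of episodes satisfies m ≤ S·A·log₂(8T/(S·A)). -/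
open Finset

/-- Bound on the number of episodes under the doubling termination criterion:
if each episode `k < m` ends because some state–action pair's visit count has
doubled, and the total number of steps is `T ≥ S·A`, then
`m ≤ S·A·log₂(8T/(S·A))`. -/
theorem episode_number_bound (S A T : ℕ) (hS : 0 < S) (hA : 0 < A)
    (hT : S * A ≤ T) (m : ℕ) (v : ℕ → Fin S × Fin A → ℕ)
    (hdouble : ∀ k, 1 ≤ k → k < m →
      ∃ x, max 1 (∑ j ∈ Finset.Ico 1 k, v j x) ≤ v k x)
    (htotal : ∑ x : Fin S × Fin A, ∑ j ∈ Finset.Ico 1 (m + 1), v j x = T) :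
    (m : ℝ) ≤ (S : ℝ) * A * Real.logb 2 (8 * T / (S * A)) := by
  classical
  set n : ℕ := S * A with hn
  have hn1 : 1 ≤ n := Nat.one_le_iff_ne_zero.mpr (by positivity)
  set K : Fin S × Fin A → ℕ :=
    fun x => ((Finset.Ico 1 m).filter
      (fun k => max 1 (∑ j ∈ Finset.Ico 1 k, v j x) ≤ v k x)).card with hK
  -- Lemma A : m ≤ ∑ K + 1
  have hAA : m ≤ (∑ x : Fin S × Fin A, K x) + 1 := by
    have h1 : ∑ x : Fin S × Fin A, K x
        = ∑ k ∈ Finset.Ico 1 m, ∑ x : Fin S × Fin A,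
            (if max 1 (∑ j ∈ Finset.Ico 1 k, v j x) ≤ v k x then 1 else 0) := by
      simp only [hK, Finset.card_filter]
      exact Finset.sum_comm
    have h2 : m - 1 ≤ ∑ x : Fin S × Fin A, K x := by
      rw [h1]
      calc m - 1 = ∑ _k ∈ Finset.Ico 1 m, 1 := by simp
        _ ≤ _ := Finset.sum_le_sum fun k hk => by
            obtain ⟨hk1, hk2⟩ := Finset.mem_Ico.mp hk
            obtain ⟨x, hx⟩ := hdouble k hk1 hk2
            calc (1:ℕ) = if max 1 (∑ j ∈ Finset.Ico 1 k, v j x) ≤ v k x then 1 else 0 := by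
                  simp [hx]
              _ ≤ _ := Finset.single_le_sum (f := fun x =>
                  if max 1 (∑ j ∈ Finset.Ico 1 k, v j x) ≤ v k x then 1 else 0)
                  (fun _ _ => Nat.zero_le _) (Finset.mem_univ x)
    omega
  -- Lemma B : doubling bound
  have hB : ∀ (x : Fin S × Fin A) (t : ℕ),
      2 ^ (((Finset.Ico 1 t).filter
        (fun k => max 1 (∑ j ∈ Finset.Ico 1 k, v j x) ≤ v k x)).card)
      ≤ (∑ j ∈ Finset.Ico 1 t, v j x) + max 1 (∑ j ∈ Finset.Ico 1 t, v j x) := by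
    intro x t
    induction t with
    | zero => simp
    | succ t ih =>
      rcases Nat.eq_zero_or_pos t with rfl | ht
      · simp
      · have hins : Finset.Ico 1 (t+1) = insert t (Finset.Ico 1 t) :=
          Nat.Ico_succ_right_eq_insert_Ico ht
        have hnotmem : t ∉ Finset.Ico 1 t := by simp
        rw [hins, Finset.filter_insert, Finset.sum_insert hnotmem]
        set N := ∑ j ∈ Finset.Ico 1 t, v j x with hN
        by_cases h : max 1 N ≤ v t x
        · rw [if_pos h]
          rw [Finset.card_insert_of_notMem (fun hc => hnotmem (Finset.mem_filter.mp hc).1)]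
          rw [pow_succ]
          have h1 : 1 ≤ v t x := le_trans (le_max_left _ _) h
          have : 2 ^ ((Finset.Ico 1 t).filter
              (fun k => max 1 (∑ j ∈ Finset.Ico 1 k, v j x) ≤ v k x)).card ≤ N + max 1 N := ih
          omega
        · rw [if_neg h]
          have := ih
          omega
  -- Lemma C : ∑ 2^K ≤ 3T
  have hC : ∑ x : Fin S × Fin A, 2 ^ K x ≤ 3 * T := by
    have h1 : ∑ x : Fin S × Fin A, 2 ^ K x
        ≤ ∑ x : Fin S × Fin A, (2 * (∑ j ∈ Finset.Ico 1 m, v j x) + 1) := by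
      refine Finset.sum_le_sum fun x _ => ?_
      have := hB x m
      simp only [hK]
      omega
    have h2 : ∑ x : Fin S × Fin A, (2 * (∑ j ∈ Finset.Ico 1 m, v j x) + 1)
        = 2 * (∑ x : Fin S × Fin A, ∑ j ∈ Finset.Ico 1 m, v j x) + n := by
      rw [Finset.sum_add_distrib, ← Finset.mul_sum]
      simp [hn, mul_comm]
    have h3 : ∑ x : Fin S × Fin A, ∑ j ∈ Finset.Ico 1 m, v j x ≤ T := by
      rw [← htotal]
      refine Finset.sum_le_sum fun x _ => Finset.sum_le_sum_of_subset ?_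
      exact Finset.Ico_subset_Ico le_rfl (Nat.le_succ m)
    omega
  -- move to reals
  have hnR : (1:ℝ) ≤ (n:ℝ) := by exact_mod_cast hn1
  have hnpos : (0:ℝ) < n := by linarith
  have hTpos : (0:ℝ) < T := by
    have : (n:ℝ) ≤ T := by exact_mod_cast hT
    linarith
  set c : ℝ := ∑ x : Fin S × Fin A, (K x : ℝ) with hc
  -- AM-GM
  have hcard : (Finset.univ : Finset (Fin S × Fin A)).card = n := by
    simp [hn, Fintype.card_prod]
  have hgm : (2:ℝ) ^ (c / n) ≤ 3 * T / n := by
    have key := Real.geom_mean_le_arith_mean_weighted Finset.univ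
      (fun _ : Fin S × Fin A => (1:ℝ)/n) (fun x => (2:ℝ) ^ (K x))
      (fun i _ => by positivity)
      (by rw [Finset.sum_const, hcard, nsmul_eq_mul, mul_one_div_cancel hnpos.ne'])
      (fun i _ => by positivity)
    have hL : ∏ x : Fin S × Fin A, ((2:ℝ) ^ (K x)) ^ ((1:ℝ)/n)
        = (2:ℝ) ^ (c / n) := by
      have : ∀ x : Fin S × Fin A, ((2:ℝ) ^ (K x)) ^ ((1:ℝ)/n)
          = (2:ℝ) ^ ((K x : ℝ) * (1/n)) := by
        intro x
        rw [← Real.rpow_natCast 2 (K x), ← Real.rpow_mul (by norm_num)]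
      rw [Finset.prod_congr rfl (fun x _ => this x)]
      rw [← Real.rpow_sum_of_pos (by norm_num : (0:ℝ) < 2)]
      congr 1
      rw [← Finset.sum_mul, hc]
      ring
    have hR : ∑ x : Fin S × Fin A, ((1:ℝ)/n) * (2:ℝ) ^ (K x)
        ≤ 3 * T / n := by
      rw [← Finset.mul_sum]
      have h4 : (∑ x : Fin S × Fin A, ((2:ℝ)) ^ (K x)) ≤ 3 * T := by
        have h5 : ((∑ x : Fin S × Fin A, 2 ^ K x : ℕ) : ℝ) ≤ ((3 * T : ℕ) : ℝ) := by
          exact_mod_cast hC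
        push_cast at h5
        exact h5
      calc ((1:ℝ)/n) * ∑ x : Fin S × Fin A, ((2:ℝ)) ^ (K x)
          = (∑ x : Fin S × Fin A, ((2:ℝ)) ^ (K x)) / n := by ring
        _ ≤ 3 * T / n := by gcongr
    calc (2:ℝ) ^ (c / n) = ∏ x : Fin S × Fin A, ((2:ℝ) ^ (K x)) ^ ((1:ℝ)/n) := hL.symm
      _ ≤ _ := key
      _ ≤ _ := hR
  -- take logs
  have hlog : c / n ≤ Real.logb 2 (3 * T / n) := by
    have h1 : Real.logb 2 ((2:ℝ) ^ (c/n)) = c / n :=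
      Real.logb_rpow (by norm_num) (by norm_num)
    rw [← h1]
    exact (Real.logb_le_logb (by norm_num) (by positivity) (by positivity)).mpr hgm
  have hcle : c ≤ n * Real.logb 2 (3 * T / n) := by
    rw [div_le_iff₀ hnpos] at hlog
    linarith [hlog]
  -- conclude
  have hmc : (m:ℝ) ≤ c + 1 := by
    have : (m:ℝ) ≤ (∑ x : Fin S × Fin A, K x : ℕ) + 1 := by exact_mod_cast hAA
    rw [hc]; push_cast at this ⊢; linarith
  have hfinal : (m:ℝ) ≤ n * Real.logb 2 (8 * T / n) := by
    have h6 : Real.logb 2 (6 * T / n) = Real.logb 2 (3 * T / n) + 1 := by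
      have : (6:ℝ) * T / n = 2 * (3 * T / n) := by ring
      rw [this, Real.logb_mul (by norm_num) (by positivity)]
      simp [Real.logb_self_eq_one]
      ring
    have h68 : Real.logb 2 (6 * T / n) ≤ Real.logb 2 (8 * T / n) := by
      apply (Real.logb_le_logb (by norm_num) (by positivity) (by positivity)).mpr
      gcongr <;> norm_num
    calc (m:ℝ) ≤ c + 1 := hmc
      _ ≤ n * Real.logb 2 (3 * T / n) + 1 := by linarith
      _ ≤ n * Real.logb 2 (3 * T / n) + n := by linarith
      _ = n * Real.logb 2 (6 * T / n) := by rw [h6]; ring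
      _ ≤ n * Real.logb 2 (8 * T / n) := by
          exact mul_le_mul_of_nonneg_left h68 (by positivity)
  have hcast : ((n:ℕ):ℝ) = (S:ℝ) * A := by push_cast [hn]; ring
  rw [← hcast]
  exact hfinal
end
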